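/- In Y_R(so_3), the Gauss generators satisfy [e_{-1,0}(u), f_{0,-1}(v)] = (k_{-1}(u)^{-1}k₀(u) - k_{-1}(v)^{-1}k₀(v))/(u-v) (as formal series, after clearing u-v). -/

import Mathlib

noncomputable section

/-- Two-variable formal series ring: Laurent-type series in `u⁻¹` (outer) over
Laurent-type series in `v⁻¹` (inner) with coefficients in `A`.  In this ring both
variables `u`, `v` and differences such as `u - v`, `u - v - 1/2` make sense. -/
abbrev KK (A : Type) [Ring A] : Type := HahnSeries ℤ (HahnSeries ℤ A)

variable {A : Type} [Ring A]

/-- embed a series `a(u) = ∑_{n≥0} a_n u^{-n}` (u = outer variable) -/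
def su (a : ℕ → A) : KK A :=
  HahnSeries.ofPowerSeries ℤ (HahnSeries ℤ A) (PowerSeries.mk (fun n => HahnSeries.C (a n)))

/-- embed a series `a(v) = ∑_{n≥0} a_n v^{-n}` (v = inner variable) -/
def sv (a : ℕ → A) : KK A :=
  HahnSeries.C (HahnSeries.ofPowerSeries ℤ A (PowerSeries.mk a))

/-- the variable `u` -/
def Uu : KK A := HahnSeries.single (-1 : ℤ) 1
/-- the variable `v` -/
def Vv : KK A := HahnSeries.C (HahnSeries.single (-1 : ℤ) 1)

/-- constants -/
def cA (a : A) : KK A := HahnSeries.C (HahnSeries.C a)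

/-- coefficients of the shifted series `a(u+c)`, using
`(u+c)^{-r} = ∑_{j≥0} (-1)^j C(r-1+j,j) c^j u^{-r-j}`. -/
def shPow [Algebra ℚ A] (c : ℚ) (a : ℕ → A) : ℕ → A :=
  fun m => ∑ r ∈ Finset.range (m + 1),
    (algebraMap ℚ A ((-c) ^ (m - r) * ((m - 1).choose (m - r) : ℚ))) * a r

/-- the central scalar 1/2 = κ -/
def half [Algebra ℚ A] : KK A := cA (algebraMap ℚ A (1/2))

/-- Kronecker delta in `KK A` -/
def kd {ι : Type} [DecidableEq ι] (i j : ι) : KK A := if i = j then 1 else 0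

variable (A) in
/-- The RTT Yangian `Y_R(so₃)`: the indices `-1, 0, 1` are encoded as `0, 1, 2 : Fin 3`,
so that the index `-i` corresponds to `Fin.rev`.  The data consists of the matrix
generator coefficients `t i j r` (with `t_{ij}(u) = ∑_r t_{ij}^{(r)} u^{-r}`,
`t_{ij}^{(0)} = δ_{ij}`) subject to the entrywise RTT relation (with denominators
`u-v`, `u-v-1/2` cleared) and the unitarity relation `T(u)Tᵗ(u+1/2) = Tᵗ(u+1/2)T(u) = 1`,
together with the Gauss generators `e`, `f`, `k` (and the inverses of the `k`'s)
defined by the unique Gauss decomposition `T(u) = F(u)K(u)E(u)`. -/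
structure YRso3 (A : Type) [Ring A] [Algebra ℚ A] where
  t : Fin 3 → Fin 3 → ℕ → A
  t_zero : ∀ i j, t i j 0 = if i = j then 1 else 0
  /-- `(u-v)(u-v-1/2)[t_{ij}(u),t_{kl}(v)] = (u-v-1/2)(t_{kj}(u)t_{il}(v)-t_{kj}(v)t_{il}(u))
      - (u-v)(δ_{k,-i} ∑_p t_{pj}(u)t_{-p,l}(v) - δ_{l,-j} ∑_p t_{k,-p}(v)t_{ip}(u))` -/
  rtt : ∀ i j k l : Fin 3,
    (Uu - Vv) * (Uu - Vv - half) * (su (t i j) * sv (t k l) - sv (t k l) * su (t i j)) =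
      (Uu - Vv - half) * (su (t k j) * sv (t i l) - sv (t k j) * su (t i l)) -
      (Uu - Vv) * (kd k i.rev * ∑ p : Fin 3, su (t p j) * sv (t p.rev l) -
                   kd l j.rev * ∑ p : Fin 3, sv (t k p.rev) * su (t i p))
  /-- `T(u)Tᵗ(u+1/2) = 1` -/
  unitary₁ : ∀ i j : Fin 3,
    ∑ p : Fin 3, su (t i p) * su (shPow (1/2) (t j.rev p.rev)) = kd i j
  /-- `Tᵗ(u+1/2)T(u) = 1` -/
  unitary₂ : ∀ i j : Fin 3,
    ∑ p : Fin 3, su (shPow (1/2) (t p.rev i.rev)) * su (t p j) = kd i j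
  -- Gauss generators: e₋₁,₀ e₀₁ e₋₁,₁ f₀,₋₁ f₁₀ f₁,₋₁ k₋₁ k₀ k₁ and the inverses k⁻¹
  e10 : ℕ → A
  e01 : ℕ → A
  e11 : ℕ → A
  f01 : ℕ → A
  f10 : ℕ → A
  f11 : ℕ → A
  km1 : ℕ → A
  k0 : ℕ → A
  k1 : ℕ → A
  km1' : ℕ → A
  k0' : ℕ → A
  k1' : ℕ → A
  e10_zero : e10 0 = 0
  e01_zero : e01 0 = 0
  e11_zero : e11 0 = 0
  f01_zero : f01 0 = 0
  f10_zero : f10 0 = 0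
  f11_zero : f11 0 = 0
  km1_zero : km1 0 = 1
  k0_zero : k0 0 = 1
  k1_zero : k1 0 = 1
  -- the Gauss decomposition T(u) = F(u)K(u)E(u), entrywise
  g11 : su (t 0 0) = su km1
  g12 : su (t 0 1) = su km1 * su e10
  g13 : su (t 0 2) = su km1 * su e11
  g21 : su (t 1 0) = su f01 * su km1
  g22 : su (t 1 1) = su k0 + su f01 * su km1 * su e10
  g23 : su (t 1 2) = su k0 * su e01 + su f01 * su km1 * su e11
  g31 : su (t 2 0) = su f11 * su km1
  g32 : su (t 2 1) = su f10 * su k0 + su f11 * su km1 * su e10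
  g33 : su (t 2 2) = su k1 + su f10 * su k0 * su e01 + su f11 * su km1 * su e11
  -- the inverses of the diagonal Gauss generators
  km1_inv₁ : su km1 * su km1' = 1
  km1_inv₂ : su km1' * su km1 = 1
  k0_inv₁ : su k0 * su k0' = 1
  k0_inv₂ : su k0' * su k0 = 1
  k1_inv₁ : su k1 * su k1' = 1
  k1_inv₂ : su k1' * su k1 = 1


/-!
Write `a, b, c, d` for `t₋₁₋₁, t₋₁₀, t₀₋₁, t₀₀` at `u` and `a', b', c', d'` at `v`, so that
`e = a⁻¹b`, `f = c'a'⁻¹` and `k₀ = d - c a⁻¹ b`. For the index pairs involved the `δ`-terms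
of the RTT relation vanish, and since `u - v - 1/2` is not a zero divisor the relations
become `(u - v)[t_ij(u), t_kl(v)] = t_kj(u)t_il(v) - t_kj(v)t_il(u)`; for `i = j = k = l = -1`
this forces `[a, a'] = 0`. Expanding `(u - v)[a⁻¹b, c'a'⁻¹]` by the Leibniz rule and
`[p⁻¹, q] = -p⁻¹[p, q]p⁻¹` leaves `a⁻¹k₀ - a⁻¹k₀' a a'⁻¹`, which is the claim once
`k₀' = k₀(v)` commutes with `a` and with `a'`. The first is again a consequence of the RTT
relations; read coefficientwise it says that every coefficient of `k₋₁` commutes with every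
coefficient of `k₀`, which gives the second.
-/

namespace HahnSeries

section Group
variable {Γ R : Type*} [AddCommGroup Γ] [PartialOrder Γ] [IsOrderedCancelAddMonoid Γ] [Ring R]

theorem commute_single {g : Γ} {r : R} (hr : ∀ s, Commute r s) (x : R⟦Γ⟧) :
    Commute (single g r) x := by
  ext n
  have hl : (single g r * x).coeff (n - g + g) = r * x.coeff (n - g) := coeff_single_mul_add
  have hr' : (x * single g r).coeff (n - g + g) = x.coeff (n - g) * r := coeff_mul_single_add
  rw [sub_add_cancel] at hl hr'
  rw [hl, hr', hr]

end Group

section Monoid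
variable {Γ R : Type*} [AddCommMonoid Γ] [LinearOrder Γ] [IsOrderedCancelAddMonoid Γ] [Ring R]

theorem isLeftRegular_of_leadingCoeff_eq_one {x : R⟦Γ⟧} (hx : x.leadingCoeff = 1) :
    IsLeftRegular x := by
  refine (isLeftRegular_iff_right_eq_zero_of_mul (R := R⟦Γ⟧)).2 fun y hxy => ?_
  by_contra hy
  have hlc := leadingCoeff_mul_of_ne_zero (x := x) (y := y)
    (by rwa [hx, one_mul, leadingCoeff_ne_zero])
  rw [hxy, hx, one_mul, leadingCoeff_zero] at hlc
  exact hy (leadingCoeff_eq_zero.1 hlc.symm)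

theorem isLeftRegular_single_one_sub_C {g : Γ} (hg : g < 0) (c : R) :
    IsLeftRegular (single g 1 - C c : R⟦Γ⟧) := by
  obtain _ | _ := subsingleton_or_nontrivial R
  · exact fun _ _ _ => Subsingleton.elim _ _
  refine isLeftRegular_of_leadingCoeff_eq_one ?_
  rw [leadingCoeff_sub, leadingCoeff_of_single]
  rw [orderTop_single one_ne_zero, C_apply]
  exact (WithTop.coe_lt_coe.2 hg).trans_le orderTop_single_le

end Monoid

end HahnSeries

theorem PowerSeries.commute_mk {R : Type*} [Ring R] {p q : ℕ → R}
    (h : ∀ n m, Commute (p n) (q m)) : Commute (mk p) (mk q) := by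
  ext n
  rw [coeff_mul, coeff_mul, ← Finset.Nat.sum_antidiagonal_swap]
  simp only [Prod.fst_swap, Prod.snd_swap, coeff_mk, (h _ _).eq]

section Commutators
variable {R : Type*} [Ring R]

theorem mul_commutator_inv_left {D p p' q : R} (hD : Commute D p') (hp : p * p' = 1)
    (hp' : p' * p = 1) :
    D * (p' * q - q * p') = -(p' * (D * (p * q - q * p)) * p') := by
  linear_combination (norm := noncomm_ring)
    D * hp' * (q * p') - D * p' * q * hp - hD.eq * ((p * q - q * p) * p')

theorem commute_quasidet_of_mul_commutator {D a a' b b' c c' d' x' : R} (hD : ∀ z, Commute D z)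
    (hDreg : IsLeftRegular D) (haa' : Commute a a')
    (hac' : D * (a * c' - c' * a) = c * a' - c' * a)
    (had' : D * (a * d' - d' * a) = c * b' - c' * b)
    (hab' : D * (a * b' - b' * a) = a * b' - a' * b)
    (ha'x' : a' * x' = 1) (hx'a' : x' * a' = 1) :
    Commute a (d' - c' * (x' * b')) := by
  have hax' : Commute a x' := haa'.units_inv_right (u := ⟨a', x', ha'x', hx'a'⟩)
  refine hDreg (?_ : D * (a * _) = D * (_ * a))
  linear_combination (norm := noncomm_ring)
    had' - hac' * (x' * b') - D * c' * hax'.eq * b' - (hD (c' * x')).eq * (a * b' - b' * a)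
      - c' * x' * hab' - c * ha'x' * b' + c' * hx'a' * b + c' * hax'.eq * b'

theorem mul_commutator_gauss {D a a' b b' c c' d d' x x' : R} (hD : ∀ z, Commute D z)
    (hbc' : D * (b * c' - c' * b) = d * a' - d' * a) (haa' : Commute a a')
    (hac' : D * (a * c' - c' * a) = c * a' - c' * a)
    (hba' : D * (b * a' - a' * b) = b * a' - b' * a)
    (hax : a * x = 1) (hxa : x * a = 1) (ha'x' : a' * x' = 1) (hx'a' : x' * a' = 1)
    (hak' : Commute a (d' - c' * (x' * b'))) (ha'k' : Commute a' (d' - c' * (x' * b'))) :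
    D * (x * b * (c' * x') - c' * x' * (x * b)) =
      x * (d - c * (x * b)) - x' * (d' - c' * (x' * b')) := by
  have hxx' : Commute x x' :=
    (haa'.units_inv_left (u := ⟨a, x, hax, hxa⟩)).units_inv_right
      (u := ⟨a', x', ha'x', hx'a'⟩)
  have hx'k' : Commute x' (d' - c' * (x' * b')) :=
    ha'k'.units_inv_left (u := ⟨a', x', ha'x', hx'a'⟩)
  have hxc' : D * (x * c' - c' * x) = -(x * (c * a' - c' * a) * x) :=
    hac' ▸ mul_commutator_inv_left (hD x) hax hxa
  have hx'b : D * (x' * b - b * x') = x' * (b * a' - b' * a) * x' := by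
    rw [mul_commutator_inv_left (hD x') ha'x' hx'a', ← hba']
    noncomm_ring
  calc D * (x * b * (c' * x') - c' * x' * (x * b))
      = x * (D * (b * c' - c' * b)) * x' - x * c' * (D * (x' * b - b * x'))
          + D * (x * c' - c' * x) * (x' * b) := by
        linear_combination (norm := noncomm_ring)
          (hD x).eq * (b * c' * x') + x * (hD c').eq * (b * x')
            - (hD (x * c')).eq * (x' * b) + D * c' * hxx'.eq * b
    _ = x * (d * a' - d' * a) * x' - x * c' * (x' * (b * a' - b' * a) * x')
          - x * (c * a' - c' * a) * x * (x' * b) := by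
        rw [hbc', hx'b, hxc']; noncomm_ring
    _ = x * (d - c * (x * b)) - x' * (d' - c' * (x' * b')) := by
        linear_combination (norm := noncomm_ring)
          x * d * ha'x' - x * c' * x' * b * ha'x' + x * c' * hax * (x' * b)
            - x * c * a' * hxx'.eq * b - x * c * ha'x' * x * b
            + x * hak'.eq * x' - hxa * ((d' - c' * (x' * b')) * x') + hx'k'.eq

end Commutators

variable (A) in
def uSeries : PowerSeries A →+* KK A :=
  (HahnSeries.ofPowerSeries ℤ (HahnSeries ℤ A)).comp (PowerSeries.map HahnSeries.C)

variable (A) in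
def vSeries : PowerSeries A →+* KK A :=
  HahnSeries.C.comp (HahnSeries.ofPowerSeries ℤ A)

theorem su_eq_uSeries (a : ℕ → A) : su a = uSeries A (PowerSeries.mk a) := rfl

theorem sv_eq_vSeries (a : ℕ → A) : sv a = vSeries A (PowerSeries.mk a) := rfl

theorem uSeries_injective : Function.Injective (uSeries A) := by
  intro p q h
  ext n
  have hn := congrArg (fun z : KK A => z.coeff (n : ℤ)) h
  simp only [uSeries, RingHom.comp_apply, HahnSeries.ofPowerSeries_apply_coeff,
    PowerSeries.coeff_map] at hn
  exact HahnSeries.C_injective hn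

theorem commute_Uu (z : KK A) : Commute Uu z :=
  HahnSeries.commute_single Commute.one_left z

theorem commute_Vv (z : KK A) : Commute Vv z :=
  HahnSeries.commute_single (HahnSeries.commute_single Commute.one_left) z

theorem commute_Uu_sub_Vv (z : KK A) : Commute (Uu - Vv) z :=
  (commute_Uu z).sub_left (commute_Vv z)

theorem isLeftRegular_Uu_sub_Vv : IsLeftRegular (Uu - Vv : KK A) :=
  HahnSeries.isLeftRegular_single_one_sub_C (by norm_num) _

theorem isLeftRegular_Uu_sub_Vv_sub_C (s : HahnSeries ℤ A) :
    IsLeftRegular (Uu - Vv - HahnSeries.C s : KK A) := by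
  rw [sub_sub, Vv, ← map_add]
  exact HahnSeries.isLeftRegular_single_one_sub_C (by norm_num) _

theorem commute_coeff_of_commute_su_sv {p q : ℕ → A} (h : Commute (su p) (sv q)) (n m : ℕ) :
    Commute (p n) (q m) := by
  have hnm := congrArg (fun z : KK A => (z.coeff (n : ℤ)).coeff (m : ℤ)) h.eq
  simp only [su, sv, HahnSeries.C_apply, HahnSeries.coeff_mul_single_zero,
    HahnSeries.coeff_single_zero_mul, HahnSeries.ofPowerSeries_apply_coeff,
    PowerSeries.coeff_mk] at hnm
  exact hnm

theorem commute_sv_of_commute_su_sv {p q : ℕ → A} (h : Commute (su p) (sv q)) :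
    Commute (sv p) (sv q) :=
  (PowerSeries.commute_mk (commute_coeff_of_commute_su_sv h)).map (vSeries A)

namespace YRso3

variable [Algebra ℚ A] (Y : YRso3 A)

theorem rtt_of_ne {i j k l : Fin 3} (hk : k ≠ i.rev) (hl : l ≠ j.rev) :
    (Uu - Vv) * (su (Y.t i j) * sv (Y.t k l) - sv (Y.t k l) * su (Y.t i j)) =
      su (Y.t k j) * sv (Y.t i l) - sv (Y.t k j) * su (Y.t i l) := by
  have h := Y.rtt i j k l
  simp only [kd, if_neg hk, if_neg hl, zero_mul, sub_zero, mul_zero] at h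
  refine isLeftRegular_Uu_sub_Vv_sub_C (HahnSeries.C (algebraMap ℚ A (1 / 2)))
    (?_ : (Uu - Vv - half) * _ = (Uu - Vv - half) * _)
  rw [← mul_assoc, ← (commute_Uu_sub_Vv _).eq]
  exact h

theorem commute_t00_t00 : Commute (su (Y.t 0 0)) (sv (Y.t 0 0)) := by
  have h := Y.rtt_of_ne (i := 0) (j := 0) (k := 0) (l := 0) (by decide) (by decide)
  rw [commute_iff_eq, ← sub_eq_zero]
  refine isLeftRegular_Uu_sub_Vv_sub_C 1 ?_
  simp only [map_one, mul_zero, sub_mul, one_mul, h, sub_self]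

variable {S : Type*} [Ring S] (φ : PowerSeries A →+* S)

/- The Gauss relations are only given in the variable `u`; since `uSeries` is injective they hold
in `PowerSeries A`, hence in the image of any ring hom, in particular in the variable `v`. -/

theorem map_t00_mul_km1' : φ (.mk (Y.t 0 0)) * φ (.mk Y.km1') = 1 := by
  rw [← map_mul, ← map_one φ]
  congr 1
  apply uSeries_injective
  rw [map_mul, map_one, ← su_eq_uSeries, ← su_eq_uSeries, Y.g11, Y.km1_inv₁]

theorem map_km1'_mul_t00 : φ (.mk Y.km1') * φ (.mk (Y.t 0 0)) = 1 := by
  rw [← map_mul, ← map_one φ]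
  congr 1
  apply uSeries_injective
  rw [map_mul, map_one, ← su_eq_uSeries, ← su_eq_uSeries, Y.g11, Y.km1_inv₂]

theorem map_e10 : φ (.mk Y.e10) = φ (.mk Y.km1') * φ (.mk (Y.t 0 1)) := by
  rw [← map_mul]
  congr 1
  apply uSeries_injective
  rw [map_mul, ← su_eq_uSeries, ← su_eq_uSeries, ← su_eq_uSeries,
    Y.g12, ← mul_assoc, Y.km1_inv₂, one_mul]

theorem map_f01 : φ (.mk Y.f01) = φ (.mk (Y.t 1 0)) * φ (.mk Y.km1') := by
  rw [← map_mul]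
  congr 1
  apply uSeries_injective
  rw [map_mul, ← su_eq_uSeries, ← su_eq_uSeries, ← su_eq_uSeries,
    Y.g21, mul_assoc, Y.km1_inv₁, mul_one]

theorem map_k0 :
    φ (.mk Y.k0) =
      φ (.mk (Y.t 1 1)) - φ (.mk (Y.t 1 0)) * (φ (.mk Y.km1') * φ (.mk (Y.t 0 1))) := by
  rw [← map_mul, ← map_mul, ← map_sub]
  congr 1
  apply uSeries_injective
  simp only [map_mul, map_sub, ← su_eq_uSeries]
  rw [Y.g22, Y.g21, Y.g12, ← mul_assoc (su Y.km1'), Y.km1_inv₂, one_mul, mul_assoc,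
    add_sub_cancel_right]

end YRso3

/-- `(u-v)[e₋₁,₀(u), f₀,₋₁(v)] = k₋₁(u)⁻¹k₀(u) - k₋₁(v)⁻¹k₀(v)`. -/
theorem stmt8 (A : Type) [Ring A] [Algebra ℚ A] (Y : YRso3 A) :
    (Uu - Vv) * (su Y.e10 * sv Y.f01 - sv Y.f01 * su Y.e10) =
      su Y.km1' * su Y.k0 - sv Y.km1' * sv Y.k0 := by
  have hbc' := Y.rtt_of_ne (i := 0) (j := 1) (k := 1) (l := 0) (by decide) (by decide)
  have haa' := Y.commute_t00_t00
  have hac' := Y.rtt_of_ne (i := 0) (j := 0) (k := 1) (l := 0) (by decide) (by decide)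
  have hba' := Y.rtt_of_ne (i := 0) (j := 1) (k := 0) (l := 0) (by decide) (by decide)
  have had' := Y.rtt_of_ne (i := 0) (j := 0) (k := 1) (l := 1) (by decide) (by decide)
  have hab' := Y.rtt_of_ne (i := 0) (j := 0) (k := 0) (l := 1) (by decide) (by decide)
  have hax := Y.map_t00_mul_km1' (uSeries A)
  have hxa := Y.map_km1'_mul_t00 (uSeries A)
  have ha'x' := Y.map_t00_mul_km1' (vSeries A)
  have hx'a' := Y.map_km1'_mul_t00 (vSeries A)
  have he := Y.map_e10 (uSeries A)
  have hf := Y.map_f01 (vSeries A)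
  have hk := Y.map_k0 (uSeries A)
  have hk' := Y.map_k0 (vSeries A)
  simp only [← su_eq_uSeries, ← sv_eq_vSeries] at hax hxa ha'x' hx'a' he hf hk hk'
  have hak' : Commute (su (Y.t 0 0)) (sv Y.k0) := hk' ▸
    commute_quasidet_of_mul_commutator commute_Uu_sub_Vv isLeftRegular_Uu_sub_Vv haa' hac' had' hab'
      ha'x' hx'a'
  have ha'k' := commute_sv_of_commute_su_sv hak'
  rw [hk'] at hak' ha'k'
  rw [he, hf, hk, hk']
  exact mul_commutator_gauss commute_Uu_sub_Vv hbc' haa' hac' hba' hax hxa ha'x' hx'a' hak' ha'k'
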